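/- Let μ > −1/2 and define D_μ(x,y,z) = (2^{μ−1}(xyz)^{−μ+1/2} / (Γ(μ+1/2)√π)) · A(x,y,z)^{2μ−1} when |x−y| < z < x+y, and D_μ(x,y,z) = 0 otherwise, where A(x,y,z) = (1/4)√((x+y)²−z²)·√(z²−(x−y)²). Then for all x,y > 0: ∫₀^∞ z^{μ+1/2} D_μ(x,y,z) dz = (xy)^{μ+1/2} / (2^μ Γ(μ+1)). -/

import Mathlib

/-!
With `a = (x - y)²` and `b = (x + y)²`, Heron's formula reads `16 A(x,y,z)² = (b - z²)(z² - a)`,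
so the integrand is a constant times `z ((b - z²)(z² - a))^(μ - 1/2)` on `(√a, √b)`. The
substitution `z = √(a + (b - a) t)` turns this into `(b - a)^(2μ) / 2` times the Beta integral
`B(μ + 1/2, μ + 1/2) = Γ(μ + 1/2)² / Γ(2μ + 1)`, and Legendre's duplication formula
`Γ(μ + 1/2) Γ(μ + 1) = 2^(-2μ) √π Γ(2μ + 1)` collapses the constant.
-/

open MeasureTheory Set Real

/-- Area of the triangle with sides `x, y, z`. -/
noncomputable def triA (x y z : ℝ) : ℝ :=
  (1/4) * Real.sqrt (((x + y) ^ 2 - z ^ 2) * (z ^ 2 - (x - y) ^ 2))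

/-- The Delsarte–Hankel translation kernel `D_μ`. -/
noncomputable def Dker (μ x y z : ℝ) : ℝ :=
  if |x - y| < z ∧ z < x + y then
    (2 ^ (μ - 1) * (x * y * z) ^ (-μ + 1/2) / (Real.Gamma (μ + 1/2) * Real.sqrt Real.pi)) *
      triA x y z ^ (2 * μ - 1)
  else 0

lemma ofReal_rpow_mul_one_sub_rpow {s t u : ℝ} (hu : u ∈ Ioo (0:ℝ) 1) :
    ((u ^ (s - 1) * (1 - u) ^ (t - 1) : ℝ) : ℂ)
      = (u : ℂ) ^ ((s : ℂ) - 1) * (1 - (u : ℂ)) ^ ((t : ℂ) - 1) := by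
  push_cast [Complex.ofReal_cpow hu.1.le, Complex.ofReal_cpow (sub_nonneg.2 hu.2.le)]
  rfl

lemma integrableOn_rpow_mul_one_sub_rpow {s t : ℝ} (hs : 0 < s) (ht : 0 < t) :
    IntegrableOn (fun u : ℝ => u ^ (s - 1) * (1 - u) ^ (t - 1)) (Ioo 0 1) := by
  have hC := (Complex.betaIntegral_convergent (u := s) (v := t) (by simpa) (by simpa)).1
  refine IntegrableOn.congr_fun (hC.mono_set Ioo_subset_Ioc_self).re (fun u hu => ?_)
    measurableSet_Ioo
  simp [← ofReal_rpow_mul_one_sub_rpow hu]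

lemma integral_rpow_mul_one_sub_rpow {s t : ℝ} (hs : 0 < s) (ht : 0 < t) :
    ∫ u in Ioo (0:ℝ) 1, u ^ (s - 1) * (1 - u) ^ (t - 1) = Gamma s * Gamma t / Gamma (s + t) := by
  have hB := Complex.betaIntegral_eq_Gamma_mul_div s t (by simpa) (by simpa)
  rw [Complex.betaIntegral, intervalIntegral.integral_of_le zero_le_one,
    integral_Ioc_eq_integral_Ioo, ← setIntegral_congr_fun measurableSet_Ioo
      (fun u hu => ofReal_rpow_mul_one_sub_rpow (s := s) (t := t) hu), integral_complex_ofReal,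
    ← Complex.ofReal_add, Complex.Gamma_ofReal, Complex.Gamma_ofReal, Complex.Gamma_ofReal] at hB
  exact_mod_cast hB

section
variable {a b : ℝ}

lemma image_sqrt_affine_Ioo (ha : 0 ≤ a) (hab : a < b) :
    (fun t => √(a + (b - a) * t)) '' Ioo 0 1 = Ioo (√a) (√b) := by
  ext z
  constructor
  · rintro ⟨t, ⟨ht0, ht1⟩, rfl⟩
    exact ⟨sqrt_lt_sqrt ha (by nlinarith), sqrt_lt_sqrt (by nlinarith) (by nlinarith)⟩
  · rintro ⟨haz, hzb⟩
    have hz : 0 < z := (sqrt_nonneg a).trans_lt haz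
    have ha_lt : a < z ^ 2 := (sqrt_lt' hz).1 haz
    have hlt_b : z ^ 2 < b := (lt_sqrt hz.le).1 hzb
    refine ⟨(z ^ 2 - a) / (b - a), ⟨by apply div_pos <;> linarith,
      (div_lt_one (by linarith)).2 (by linarith)⟩, ?_⟩
    dsimp only
    rw [mul_div_cancel₀ _ (sub_ne_zero.2 hab.ne'), add_sub_cancel, sqrt_sq hz.le]

lemma strictMonoOn_sqrt_affine (ha : 0 ≤ a) (hab : a < b) :
    StrictMonoOn (fun t => √(a + (b - a) * t)) (Ioo 0 1) :=
  fun _ ht _ _ hlt => sqrt_lt_sqrt (by nlinarith [ht.1]) (by nlinarith)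

lemma hasDerivAt_sqrt_affine {t : ℝ} (h : 0 < a + (b - a) * t) :
    HasDerivAt (fun t => √(a + (b - a) * t)) ((b - a) / (2 * √(a + (b - a) * t))) t := by
  have := ((hasDerivAt_id t).const_mul (b - a)).const_add a
  simpa using this.sqrt h.ne'

lemma abs_deriv_smul_mul_rpow_sub_sq_mul_sq_sub (ha : 0 ≤ a) (hab : a < b) (s : ℝ) {t : ℝ}
    (ht : t ∈ Ioo (0:ℝ) 1) :
    |(b - a) / (2 * √(a + (b - a) * t))| •
        (√(a + (b - a) * t) *
          ((b - √(a + (b - a) * t) ^ 2) * (√(a + (b - a) * t) ^ 2 - a)) ^ (s - 1))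
      = (b - a) ^ (2 * s - 1) / 2 * (t ^ (s - 1) * (1 - t) ^ (s - 1)) := by
  obtain ⟨ht0, ht1⟩ := ht
  have hba : 0 < b - a := sub_pos.2 hab
  have hpos : 0 < a + (b - a) * t := by nlinarith
  have hfactor : (b - (a + (b - a) * t)) * (a + (b - a) * t - a) = (b - a) ^ 2 * (t * (1 - t)) := by
    ring
  rw [sq_sqrt hpos.le, hfactor, abs_of_pos (by positivity), smul_eq_mul,
    mul_rpow (by positivity) (mul_nonneg ht0.le (by linarith)), mul_rpow ht0.le (by linarith),
    ← rpow_natCast, ← rpow_mul hba.le, show 2 * s - 1 = 1 + (2:ℕ) * (s - 1) by push_cast; ring,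
    rpow_add hba, rpow_one]
  field_simp

theorem integrableOn_mul_rpow_sub_sq_mul_sq_sub (ha : 0 ≤ a) (hab : a < b) {s : ℝ} (hs : 0 < s) :
    IntegrableOn (fun z => z * ((b - z ^ 2) * (z ^ 2 - a)) ^ (s - 1)) (Ioo (√a) (√b)) := by
  rw [← image_sqrt_affine_Ioo ha hab, integrableOn_image_iff_integrableOn_abs_deriv_smul
    measurableSet_Ioo (fun t ht => (hasDerivAt_sqrt_affine (by nlinarith [ht.1])).hasDerivWithinAt)
    (strictMonoOn_sqrt_affine ha hab).injOn]
  refine IntegrableOn.congr_fun ((integrableOn_rpow_mul_one_sub_rpow hs hs).const_mul _)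
    (fun t ht => (abs_deriv_smul_mul_rpow_sub_sq_mul_sq_sub ha hab s ht).symm) measurableSet_Ioo

theorem integral_mul_rpow_sub_sq_mul_sq_sub (ha : 0 ≤ a) (hab : a < b) {s : ℝ} (hs : 0 < s) :
    ∫ z in Ioo (√a) (√b), z * ((b - z ^ 2) * (z ^ 2 - a)) ^ (s - 1)
      = (b - a) ^ (2 * s - 1) / 2 * (Gamma s * Gamma s / Gamma (s + s)) := by
  rw [← image_sqrt_affine_Ioo ha hab, integral_image_eq_integral_abs_deriv_smul
    measurableSet_Ioo (fun t ht => (hasDerivAt_sqrt_affine (by nlinarith [ht.1])).hasDerivWithinAt)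
    (strictMonoOn_sqrt_affine ha hab).injOn,
    setIntegral_congr_fun measurableSet_Ioo
      (fun t ht => abs_deriv_smul_mul_rpow_sub_sq_mul_sq_sub ha hab s ht),
    integral_const_mul, integral_rpow_mul_one_sub_rpow hs hs]

end

lemma rpow_add_half_mul_Dker_of_mem {μ x y z : ℝ} (hx : 0 < x) (hy : 0 < y)
    (hz : z ∈ Ioo |x - y| (x + y)) :
    z ^ (μ + 1/2) * Dker μ x y z
      = 2 ^ (μ - 1) * (x * y) ^ (-μ + 1/2) / (4 ^ (2 * μ - 1) * Gamma (μ + 1/2) * √π) *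
        (z * (((x + y) ^ 2 - z ^ 2) * (z ^ 2 - (x - y) ^ 2)) ^ (μ - 1/2)) := by
  have hz0 : 0 < z := (abs_nonneg _).trans_lt hz.1
  have hP : 0 ≤ ((x + y) ^ 2 - z ^ 2) * (z ^ 2 - (x - y) ^ 2) := by
    have h1 : (x - y) ^ 2 < z ^ 2 := by
      rw [← sq_abs]; exact pow_lt_pow_left₀ hz.1 (abs_nonneg _) two_ne_zero
    have h2 : z ^ 2 < (x + y) ^ 2 := pow_lt_pow_left₀ hz.2 hz0.le two_ne_zero
    exact mul_nonneg (by linarith) (by linarith)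
  have htri : triA x y z ^ (2 * μ - 1)
      = (((x + y) ^ 2 - z ^ 2) * (z ^ 2 - (x - y) ^ 2)) ^ (μ - 1/2) / 4 ^ (2 * μ - 1) := by
    rw [triA, one_div_mul_eq_div, div_rpow (sqrt_nonneg _) (by norm_num), sqrt_eq_rpow,
      ← rpow_mul hP]
    ring_nf
  have hz_pow : z ^ (μ + 1/2) * z ^ (-μ + 1/2) = z := by
    rw [← rpow_add hz0, show μ + 1/2 + (-μ + 1/2) = 1 by ring, rpow_one]
  rw [Dker, if_pos (mem_Ioo.1 hz), htri, mul_rpow (by positivity) hz0.le]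
  linear_combination
    (2 ^ (μ - 1) * (x * y) ^ (-μ + 1/2) / (4 ^ (2 * μ - 1) * Gamma (μ + 1/2) * √π) *
    (((x + y) ^ 2 - z ^ 2) * (z ^ 2 - (x - y) ^ 2)) ^ (μ - 1/2)) * hz_pow

lemma Dker_normalization {μ p : ℝ} (hμ : -(1/2 : ℝ) < μ) (hp : 0 < p) :
    2 ^ (μ - 1) * p ^ (-μ + 1/2) / (4 ^ (2 * μ - 1) * Gamma (μ + 1/2) * √π) *
        ((4 * p) ^ (2 * μ) / 2 * (Gamma (μ + 1/2) * Gamma (μ + 1/2) / Gamma (2 * μ + 1)))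
      = p ^ (μ + 1/2) / (2 ^ μ * Gamma (μ + 1)) := by
  have hΓ1 : 0 < Gamma (μ + 1) := Gamma_pos_of_pos (by linarith)
  have hΓ2 : 0 < Gamma (2 * μ + 1) := Gamma_pos_of_pos (by linarith)
  have hpow4 : (4:ℝ) ^ (2 * μ) = ((2:ℝ) ^ μ) ^ 4 := by
    rw [show (4:ℝ) = 2 ^ 2 by norm_num, ← rpow_natCast_mul zero_le_two,
      ← rpow_mul_natCast zero_le_two]
    ring_nf
  have h2 : (2:ℝ) ^ (μ - 1) = 2 ^ μ / 2 := rpow_sub_one two_ne_zero μ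
  have h4 : (4:ℝ) ^ (2 * μ - 1) = ((2:ℝ) ^ μ) ^ 4 / 4 := by
    rw [rpow_sub_one (by norm_num), hpow4]
  have hp1 : p ^ (-μ + 1/2) = p / p ^ (μ + 1/2) := by
    rw [show -μ + 1/2 = 1 - (μ + 1/2) by ring, rpow_sub hp, rpow_one]
  have hp2 : p ^ (2 * μ) = (p ^ (μ + 1/2)) ^ 2 / p := by
    rw [← rpow_mul_natCast hp.le, show (μ + 1/2) * ((2:ℕ):ℝ) = 2 * μ + 1 by push_cast; ring,
      rpow_add_one hp.ne', mul_div_cancel_right₀ _ hp.ne']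
  have hdup := Gamma_mul_Gamma_add_half (μ + 1/2)
  rw [show μ + 1/2 + 1/2 = μ + 1 by ring, show 2 * (μ + 1/2) = 2 * μ + 1 by ring,
    show 1 - (2 * μ + 1) = -(μ * (2:ℕ)) by push_cast; ring, rpow_neg zero_le_two,
    rpow_mul_natCast zero_le_two] at hdup
  replace hdup : Gamma (μ + 1/2) * Gamma (μ + 1) * (2 ^ μ) ^ 2 = Gamma (2 * μ + 1) * √π := by
    rw [hdup]; field_simp
  rw [mul_rpow (by norm_num) hp.le, h2, h4, hp1, hp2, hpow4]
  generalize Gamma (μ + 1/2) = G at *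
  field_simp
  linear_combination 4 * hdup

lemma rpow_add_half_mul_Dker_eq_indicator {μ x y : ℝ} (hx : 0 < x) (hy : 0 < y) :
    (fun z => z ^ (μ + 1/2) * Dker μ x y z) = (Ioo |x - y| (x + y)).indicator fun z =>
      2 ^ (μ - 1) * (x * y) ^ (-μ + 1/2) / (4 ^ (2 * μ - 1) * Gamma (μ + 1/2) * √π) *
        (z * (((x + y) ^ 2 - z ^ 2) * (z ^ 2 - (x - y) ^ 2)) ^ (μ - 1/2)) := by
  ext z
  by_cases hz : z ∈ Ioo |x - y| (x + y)
  · rw [indicator_of_mem hz, rpow_add_half_mul_Dker_of_mem hx hy hz]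
  · rw [indicator_of_notMem hz, Dker, if_neg (mt mem_Ioo.2 hz), mul_zero]

/-- `∫₀^∞ z^{μ+1/2} D_μ(x,y,z) dz = (xy)^{μ+1/2} / (2^μ Γ(μ+1))`. -/
theorem stmt5 (μ : ℝ) (hμ : -(1/2 : ℝ) < μ) (x y : ℝ) (hx : 0 < x) (hy : 0 < y) :
    IntegrableOn (fun z => z ^ (μ + 1/2) * Dker μ x y z) (Ioi (0:ℝ)) ∧
      ∫ z in Ioi (0:ℝ), z ^ (μ + 1/2) * Dker μ x y z =
        (x * y) ^ (μ + 1/2) / (2 ^ μ * Real.Gamma (μ + 1)) := by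
  have hs : 0 < μ + 1/2 := by linarith
  have hab : (x - y) ^ 2 < (x + y) ^ 2 := by nlinarith
  have hbounds : Ioo (√((x - y) ^ 2)) (√((x + y) ^ 2)) = Ioo |x - y| (x + y) := by
    rw [sqrt_sq_eq_abs, sqrt_sq (by linarith)]
  have hsub : Ioo |x - y| (x + y) ⊆ Ioi 0 := fun z hz => (abs_nonneg _).trans_lt hz.1
  have hint := integrableOn_mul_rpow_sub_sq_mul_sq_sub (sq_nonneg (x - y)) hab hs
  have hval := integral_mul_rpow_sub_sq_mul_sq_sub (sq_nonneg (x - y)) hab hs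
  rw [hbounds, show μ + 1/2 - 1 = μ - 1/2 by ring] at hint hval
  rw [show (x + y) ^ 2 - (x - y) ^ 2 = 4 * (x * y) by ring, show 2 * (μ + 1/2) - 1 = 2 * μ by ring,
    show μ + 1/2 + (μ + 1/2) = 2 * μ + 1 by ring] at hval
  rw [rpow_add_half_mul_Dker_eq_indicator hx hy]
  constructor
  · exact (IntegrableOn.integrable_indicator (hint.const_mul _) measurableSet_Ioo).integrableOn
  · rw [setIntegral_indicator measurableSet_Ioo, inter_eq_self_of_subset_right hsub,
      integral_const_mul, hval, Dker_normalization hμ (mul_pos hx hy)]
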